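/- arXiv:2505.17360 — 2 statements merged into one kernel-verified Lean document; each statement's English description precedes it below -/
import Mathlib

section
/- Let μ be a probability distribution on ℝ with finite moments, and let {ψ_k}_{k≥0} be the orthonormal polynomials for μ with ψ₀ = 1. For α, β ∈ ℕ^m with coordinates sorted in decreasing order, E_{λ∼μ^m} E_{π,π'∼S_m} [ ∏_i ψ_{α_i}(λ_{π(i)}) ψ_{β_i}(λ_{π'(i)}) ] equals 0 if α ≠ β, and is strictly positive if α = β (and α ≠ 0). -/
/-!
Each term of the double sum factorises over the independent coordinates: after reindexing by
`π` and `π'`, coordinate `j` contributes `∫ ψ_{α(π⁻¹ j)} ψ_{β(π'⁻¹ j)} dμ`, so by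
orthonormality the term is `1` if `α ∘ π⁻¹ = β ∘ π'⁻¹` and `0` otherwise. Two antitone
tuples that are rearrangements of each other coincide, so for `α ≠ β` every term vanishes,
while for `α = β` all terms are nonnegative and those with `π = π'` equal `1`.
-/

open MeasureTheory

theorem Antitone.eq_of_eq_comp_perm {m : ℕ} {T : Type*} [LinearOrder T] {f g : Fin m → T}
    (hf : Antitone f) (hg : Antitone g) (σ : Equiv.Perm (Fin m)) (h : f = g ∘ σ) : f = g :=
  List.ofFn_injective <| List.Perm.eq_of_sortedGE (List.sortedGE_ofFn_iff.2 hf)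
    (List.sortedGE_ofFn_iff.2 hg) (h ▸ σ.ofFn_comp_perm g)

section Orthonormal

variable {Ω ι κ : Type*} [MeasurableSpace Ω] [Fintype ι] [DecidableEq κ]
  {μ : Measure Ω} [SigmaFinite μ] {φ : κ → Ω → ℝ} (horth : ∀ k l, ∫ x, φ k x * φ l x ∂μ = if k = l then 1 else 0)
include horth

theorem integral_pi_prod_mul_of_orthonormal (a b : ι → κ) :
    ∫ x : ι → Ω, ∏ i, φ (a i) (x i) * φ (b i) (x i) ∂(Measure.pi fun _ => μ) =
      if a = b then 1 else 0 := by
  rw [integral_fintype_prod_eq_prod (fun i y => φ (a i) y * φ (b i) y)]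
  simp only [horth, Fintype.prod_boole, funext_iff]

theorem integral_pi_prod_comp_perm_mul_of_orthonormal (a b : ι → κ) (σ τ : Equiv.Perm ι) :
    ∫ x : ι → Ω, ∏ i, φ (a i) (x (σ i)) * φ (b i) (x (τ i)) ∂(Measure.pi fun _ => μ) =
      if a ∘ σ.symm = b ∘ τ.symm then 1 else 0 := by
  have reindex : ∀ x : ι → Ω, ∏ i, φ (a i) (x (σ i)) * φ (b i) (x (τ i)) =
      ∏ j, φ (a (σ.symm j)) (x j) * φ (b (τ.symm j)) (x j) := fun x => by
    rw [Finset.prod_mul_distrib, Finset.prod_mul_distrib,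
      ← Equiv.prod_comp σ (fun j => φ (a (σ.symm j)) (x j)),
      ← Equiv.prod_comp τ (fun j => φ (b (τ.symm j)) (x j))]
    simp only [Equiv.symm_apply_apply]
  simp_rw [reindex]
  exact integral_pi_prod_mul_of_orthonormal horth (a ∘ σ.symm) (b ∘ τ.symm)

end Orthonormal

theorem stmt9_general (m : ℕ) (μ : MeasureTheory.Measure ℝ) [MeasureTheory.IsProbabilityMeasure μ]
    (ψ : ℕ → Polynomial ℝ)
    (horth : ∀ k l, ∫ x, (ψ k).eval x * (ψ l).eval x ∂μ = if k = l then 1 else 0)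
    (α β : Fin m → ℕ) (hα : Antitone α) (hβ : Antitone β)
    (E : ℝ)
    (hE : E = ((m.factorial : ℝ) ^ 2)⁻¹ *
      ∑ π : Equiv.Perm (Fin m), ∑ π' : Equiv.Perm (Fin m),
        ∫ lam : Fin m → ℝ,
          (∏ i, (ψ (α i)).eval (lam (π i)) * (ψ (β i)).eval (lam (π' i)))
          ∂(MeasureTheory.Measure.pi fun _ => μ)) :
    (α ≠ β → E = 0) ∧ (α = β → α ≠ 0 → 0 < E) := by
  simp only [integral_pi_prod_comp_perm_mul_of_orthonormal (φ := fun k x => (ψ k).eval x) horth]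
    at hE
  subst hE
  refine ⟨fun hne => ?_, fun heq _ => ?_⟩
  · have no_match : ∀ π π' : Equiv.Perm (Fin m), α ∘ π.symm ≠ β ∘ π'.symm := fun π π' h =>
      hne <| hα.eq_of_eq_comp_perm hβ (π.trans π'.symm) <|
        funext fun i => by simpa using congrFun h (π i)
    simp [no_match]
  · subst heq
    refine mul_pos (by positivity) (Finset.sum_pos (fun π _ => ?_) Finset.univ_nonempty)
    exact Finset.sum_pos' (fun _ _ => by positivity) ⟨π, Finset.mem_univ _, by simp⟩

/-- Orthogonality of symmetrized products of orthonormal polynomials: for sorted index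
vectors α, β, the symmetrized cross-moment vanishes if α ≠ β and is strictly positive if
α = β ≠ 0. -/
theorem stmt9 (m : ℕ) (μ : MeasureTheory.Measure ℝ) [MeasureTheory.IsProbabilityMeasure μ]
    (hmom : ∀ k : ℕ, MeasureTheory.Integrable (fun x => x ^ k) μ)
    (ψ : ℕ → Polynomial ℝ) (hψ0 : ψ 0 = 1)
    (hdeg : ∀ k, (ψ k).natDegree = k)
    (horth : ∀ k l, ∫ x, (ψ k).eval x * (ψ l).eval x ∂μ = if k = l then 1 else 0)
    (α β : Fin m → ℕ) (hα : Antitone α) (hβ : Antitone β)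
    (E : ℝ)
    (hE : E = ((m.factorial : ℝ) ^ 2)⁻¹ *
      ∑ π : Equiv.Perm (Fin m), ∑ π' : Equiv.Perm (Fin m),
        ∫ lam : Fin m → ℝ,
          (∏ i, (ψ (α i)).eval (lam (π i)) * (ψ (β i)).eval (lam (π' i)))
          ∂(MeasureTheory.Measure.pi fun _ => μ)) :
    (α ≠ β → E = 0) ∧ (α = β → α ≠ 0 → 0 < E) :=
  stmt9_general m μ ψ horth α β hα hβ E hE
end

section
/- Let μ be a probability measure on ℝ with finite moments and ν_P = μ^{m-1} × δ_{λ*}. For any symmetric polynomial f of degree d in m variables with E_{μ^m}[f] = 0, there is a univariate polynomial g of degree at most d with E_μ[g] = 0 such that E_{λ∼μ^m}[(Σ_{i=1}^m g(λ_i))²] ≤ E_{λ∼μ^m}[f(λ)²] and E_{λ∼ν_P}[Σ_{i=1}^m g(λ_i)] = E_{λ∼ν_P}[f(λ)]. -/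
/-!
Take for `g` the conditional expectation of `f` given one coordinate `λ_l`,
`g t = ∫ f(λ[l ↦ t]) dμ^m(λ)`; integrating the monomials of `f` against the moments of `μ`
shows that `g` is a polynomial of degree at most `deg f`, with `E g = E f = 0`. Fubini gives
`E[f · h(λ_l)] = E_μ[g h]`, and by symmetry of `f` the same holds for every coordinate `λ_i`.
The summands `g(λ_i)` are independent and centred, so `P = ∑ g(λ_i)` satisfies
`E[f P] = E[P²] = m E[g²]`, whence `E[P²] ≤ E[P²] + E[(f - P)²] = E[f²]`.
Under `ν_P` both means equal `g(λ*)`: for `P` because the other summands are centred, for `f` by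
the definition of `g`.
-/

open MeasureTheory Finset Function

section ProductMeasure

variable {ι X : Type*} [Fintype ι] [MeasurableSpace X] {μ : Measure X}
  {E : Type*} [NormedAddCommGroup E] [NormedSpace ℝ E]

theorem integral_comp_perm [SigmaFinite μ] (σ : Equiv.Perm ι) (F : (ι → X) → E) :
    ∫ x, F (x ∘ σ) ∂(Measure.pi fun _ => μ) = ∫ x, F x ∂(Measure.pi fun _ => μ) :=
  (measurePreserving_arrowCongr' (fun _ => μ) (fun _ => μ) σ.symm (MeasurableEquiv.refl X)
    fun _ => MeasurePreserving.id μ).integral_comp' F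

variable [IsProbabilityMeasure μ]

theorem measurePreserving_update [DecidableEq ι] (i : ι) :
    MeasurePreserving (fun p : (ι → X) × X => update p.1 i p.2)
      ((Measure.pi fun _ => μ).prod μ) (Measure.pi fun _ => μ) := by
  have hmeas : Measurable (fun p : (ι → X) × X => update p.1 i p.2) := by fun_prop
  refine ⟨hmeas, (Measure.pi_eq fun s hs => ?_).symm⟩
  have hpre : (fun p : (ι → X) × X => update p.1 i p.2) ⁻¹' Set.univ.pi s
      = Set.univ.pi (update s i Set.univ) ×ˢ s i := by
    ext ⟨x, t⟩
    simp only [Set.mem_preimage, Set.mem_pi, Set.mem_univ, true_implies, Set.mem_prod]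
    refine ⟨fun h => ⟨fun j => ?_, by simpa using h i⟩, fun ⟨h, ht⟩ j => ?_⟩
    all_goals rcases eq_or_ne j i with rfl | hj
    · simp
    · simpa [hj] using h j
    · simpa using ht
    · simpa [hj] using h j
  rw [Measure.map_apply hmeas (MeasurableSet.univ_pi hs), hpre, Measure.prod_prod,
    Measure.pi_pi, ← mul_prod_erase univ _ (mem_univ i), update_self, measure_univ, one_mul,
    mul_comm, ← mul_prod_erase univ (fun j => μ (s j)) (mem_univ i)]
  exact congrArg _ (prod_congr rfl fun j hj => by rw [update_of_ne (ne_of_mem_erase hj)])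

theorem integral_eq_integral_integral_update [DecidableEq ι] (i : ι) {F : (ι → X) → E}
    (hF : Integrable F (Measure.pi fun _ => μ)) :
    ∫ x, F x ∂(Measure.pi fun _ => μ)
      = ∫ t, ∫ x, F (update x i t) ∂(Measure.pi fun _ => μ) ∂μ := by
  have h := measurePreserving_update (μ := μ) i
  have hmap := integral_map h.measurable.aemeasurable (h.map_eq ▸ hF.aestronglyMeasurable)
  rw [h.map_eq] at hmap
  rw [hmap]
  exact integral_prod_symm _ ((h.integrable_comp hF.aestronglyMeasurable).2 hF)

theorem integral_comp_mul_comp_of_ne {i j : ι} (hij : i ≠ j) (h h' : X → ℝ) :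
    ∫ x, h (x i) * h' (x j) ∂(Measure.pi fun _ => μ)
      = (∫ t, h t ∂μ) * ∫ t, h' t ∂μ := by
  classical
  let G : ι → X → ℝ := fun k => if k = i then h else if k = j then h' else fun _ => 1
  have hG : ∀ k, k ≠ i ∧ k ≠ j → G k = fun _ => 1 := fun k hk => by simp [G, hk.1, hk.2]
  calc ∫ x, h (x i) * h' (x j) ∂(Measure.pi fun _ => μ)
      = ∫ x, ∏ k, G k (x k) ∂(Measure.pi fun _ => μ) := by
        congr 1 with x
        rw [prod_eq_mul i j hij (fun k _ hk => by simp [hG k hk]) (by simp) (by simp)]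
        simp [G, hij.symm]
    _ = ∏ k, ∫ t, G k t ∂μ := integral_fintype_prod_eq_prod G
    _ = (∫ t, h t ∂μ) * ∫ t, h' t ∂μ := by
        rw [prod_eq_mul i j hij (fun k _ hk => by simp [hG k hk]) (by simp) (by simp)]
        simp [G, hij.symm]

end ProductMeasure

theorem integral_sq_le_of_integral_mul_eq {α : Type*} [MeasurableSpace α] {ν : Measure α}
    {F P : α → ℝ} (hF : Integrable (fun a => F a ^ 2) ν)
    (hFP : Integrable (fun a => F a * P a) ν) (hP : Integrable (fun a => P a ^ 2) ν)
    (h : ∫ a, F a * P a ∂ν = ∫ a, P a ^ 2 ∂ν) :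
    ∫ a, P a ^ 2 ∂ν ≤ ∫ a, F a ^ 2 ∂ν := by
  have hexpand : ∫ a, (F a - P a) ^ 2 ∂ν
      = ∫ a, F a ^ 2 ∂ν - 2 * ∫ a, F a * P a ∂ν + ∫ a, P a ^ 2 ∂ν := by
    simp_rw [sub_sq, mul_assoc]
    rw [integral_add (f := fun a => F a ^ 2 - 2 * (F a * P a)) (hF.sub (hFP.const_mul 2)) hP,
      integral_sub hF (hFP.const_mul 2), integral_const_mul]
  have : 0 ≤ ∫ a, (F a - P a) ^ 2 ∂ν := integral_nonneg fun a => sq_nonneg (F a - P a)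
  linarith

namespace MvPolynomial

theorem eval_aeval_X {R ι : Type*} [CommSemiring R] (g : Polynomial R) (i : ι) (x : ι → R) :
    eval x (Polynomial.aeval (X i) g) = g.eval (x i) := by
  have h := Polynomial.aeval_algHom_apply (aeval x) (X i : MvPolynomial ι R) g
  rw [aeval_X, Polynomial.coe_aeval_eq_eval] at h
  exact h.symm

variable {ι : Type*} [Fintype ι] {μ : Measure ℝ}

theorem integrable_eval [SigmaFinite μ] (hmom : ∀ k : ℕ, Integrable (fun t => t ^ k) μ)
    (p : MvPolynomial ι ℝ) : Integrable (fun x => eval x p) (Measure.pi fun _ => μ) := by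
  induction p using induction_on' with
  | monomial α c =>
    simp only [eval_monomial, Finsupp.prod_pow]
    exact (Integrable.fintype_prod fun i => hmom (α i)).const_mul c
  | add p q hp hq =>
    simp only [eval_add]
    exact hp.add hq

theorem IsSymmetric.integral_eval_mul_comp [SigmaFinite μ] [DecidableEq ι]
    {p : MvPolynomial ι ℝ} (hp : p.IsSymmetric) (h : ℝ → ℝ) (i j : ι) :
    ∫ x, eval x p * h (x i) ∂(Measure.pi fun _ => μ)
      = ∫ x, eval x p * h (x j) ∂(Measure.pi fun _ => μ) := by
  rw [← integral_comp_perm (Equiv.swap i j) fun x => eval x p * h (x j)]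
  simp only [comp_apply, Equiv.swap_apply_right, ← eval_rename, hp (Equiv.swap i j)]

variable [DecidableEq ι]

variable (μ) in
noncomputable def marginalPoly (l : ι) (p : MvPolynomial ι ℝ) : Polynomial ℝ :=
  ∑ α ∈ p.support,
    Polynomial.monomial (α l) (p.coeff α * ∏ i ∈ univ.erase l, ∫ t, t ^ α i ∂μ)

theorem natDegree_marginalPoly_le (l : ι) (p : MvPolynomial ι ℝ) :
    (marginalPoly μ l p).natDegree ≤ p.totalDegree :=
  Polynomial.natDegree_sum_le_of_forall_le _ _ fun α hα =>
    (Polynomial.natDegree_monomial_le _).trans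
      ((Finsupp.le_degree l α).trans (le_totalDegree hα))

theorem eval_update_monomial (x : ι → ℝ) (l : ι) (t : ℝ) (α : ι →₀ ℕ) (c : ℝ) :
    eval (update x l t) (monomial α c) = c * ∏ i, (if i = l then t else x i) ^ α i := by
  simp only [eval_monomial, Finsupp.prod_pow, update_apply]

variable [IsProbabilityMeasure μ]

theorem integrable_eval_update_monomial (hmom : ∀ k : ℕ, Integrable (fun t => t ^ k) μ)
    (l : ι) (t : ℝ) (α : ι →₀ ℕ) (c : ℝ) :
    Integrable (fun x => eval (update x l t) (monomial α c)) (Measure.pi fun _ => μ) := by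
  simp only [eval_update_monomial]
  refine (Integrable.fintype_prod (ι := ι) (μ := fun _ => μ)
    (f := fun i s => (if i = l then t else s) ^ α i) fun i => ?_).const_mul c
  split_ifs
  · exact integrable_const _
  · exact hmom (α i)

theorem integral_eval_update_monomial (l : ι) (t : ℝ) (α : ι →₀ ℕ) (c : ℝ) :
    ∫ x, eval (update x l t) (monomial α c) ∂(Measure.pi fun _ => μ)
      = c * (t ^ α l * ∏ i ∈ univ.erase l, ∫ s, s ^ α i ∂μ) := by
  simp only [eval_update_monomial]
  rw [integral_const_mul,
    integral_fintype_prod_eq_prod (fun i s => (if i = l then t else s) ^ α i),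
    ← mul_prod_erase univ _ (mem_univ l)]
  simp only [if_pos, integral_const, probReal_univ, one_smul]
  congr 2
  exact prod_congr rfl fun i hi => by simp only [if_neg (ne_of_mem_erase hi)]

theorem eval_marginalPoly (hmom : ∀ k : ℕ, Integrable (fun t => t ^ k) μ) (l : ι)
    (p : MvPolynomial ι ℝ) (t : ℝ) :
    (marginalPoly μ l p).eval t = ∫ x, eval (update x l t) p ∂(Measure.pi fun _ => μ) := by
  conv_rhs => rw [p.as_sum]
  simp only [map_sum]
  rw [integral_finsetSum _ fun α _ => integrable_eval_update_monomial hmom l t α _]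
  simp only [marginalPoly, Polynomial.eval_finsetSum, Polynomial.eval_monomial,
    integral_eval_update_monomial]
  exact sum_congr rfl fun α _ => by ring

theorem integral_eval_mul_eq_integral_marginalPoly_mul
    (hmom : ∀ k : ℕ, Integrable (fun t => t ^ k) μ) (l : ι) (p : MvPolynomial ι ℝ)
    {h : ℝ → ℝ} (hint : Integrable (fun x => eval x p * h (x l)) (Measure.pi fun _ => μ)) :
    ∫ x, eval x p * h (x l) ∂(Measure.pi fun _ => μ)
      = ∫ t, (marginalPoly μ l p).eval t * h t ∂μ := by
  rw [integral_eq_integral_integral_update l hint]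
  congr 1 with t
  simp only [update_self]
  rw [integral_mul_const, eval_marginalPoly hmom]

theorem integral_marginalPoly (hmom : ∀ k : ℕ, Integrable (fun t => t ^ k) μ) (l : ι)
    (p : MvPolynomial ι ℝ) :
    ∫ t, (marginalPoly μ l p).eval t ∂μ = ∫ x, eval x p ∂(Measure.pi fun _ => μ) := by
  simpa using (integral_eval_mul_eq_integral_marginalPoly_mul hmom l p (h := fun _ => 1)
    (by simpa using integrable_eval hmom p)).symm

theorem integral_sum_eval_sq (hmom : ∀ k : ℕ, Integrable (fun t => t ^ k) μ)
    (g : Polynomial ℝ) (hg : ∫ t, g.eval t ∂μ = 0) :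
    ∫ x : ι → ℝ, (∑ i, g.eval (x i)) ^ 2 ∂(Measure.pi fun _ => μ)
      = Fintype.card ι * ∫ t, g.eval t ^ 2 ∂μ := by
  have hint : ∀ i j : ι,
      Integrable (fun x => g.eval (x i) * g.eval (x j)) (Measure.pi fun _ => μ) :=
    fun i j => (integrable_eval hmom (Polynomial.aeval (X i) g * Polynomial.aeval (X j) g)).congr
      (ae_of_all _ fun x => by simp only [eval_mul, eval_aeval_X])
  have hpair : ∀ i j : ι, ∫ x, g.eval (x i) * g.eval (x j) ∂(Measure.pi fun _ => μ)
      = if i = j then ∫ t, g.eval t * g.eval t ∂μ else 0 := by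
    intro i j
    split_ifs with hij
    · subst hij
      exact integral_comp_eval (μ := fun _ => μ)
        (by fun_prop : Continuous fun t => g.eval t * g.eval t).aestronglyMeasurable
    · rw [← zero_mul (∫ t, g.eval t ∂μ), ← hg]
      exact integral_comp_mul_comp_of_ne hij (fun t => g.eval t) (fun t => g.eval t)
  simp_rw [sq, sum_mul_sum]
  rw [integral_finsetSum _ fun i _ => integrable_finsetSum _ fun j _ => hint i j]
  simp_rw [integral_finsetSum _ fun j _ => hint _ j, hpair]
  simp

theorem IsSymmetric.integral_eval_mul_sum_marginalPoly
    (hmom : ∀ k : ℕ, Integrable (fun t => t ^ k) μ) {p : MvPolynomial ι ℝ}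
    (hp : p.IsSymmetric) (l : ι) :
    ∫ x, eval x p * ∑ i, (marginalPoly μ l p).eval (x i) ∂(Measure.pi fun _ => μ)
      = Fintype.card ι * ∫ t, (marginalPoly μ l p).eval t ^ 2 ∂μ := by
  set g := marginalPoly μ l p
  have hint : ∀ i, Integrable (fun x => eval x p * g.eval (x i)) (Measure.pi fun _ => μ) :=
    fun i => (integrable_eval hmom (p * Polynomial.aeval (X i) g)).congr
      (ae_of_all _ fun x => by simp only [eval_mul, eval_aeval_X])
  have hterm : ∀ i,
      ∫ x, eval x p * g.eval (x i) ∂(Measure.pi fun _ => μ) = ∫ t, g.eval t ^ 2 ∂μ :=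
    fun i => by
      rw [hp.integral_eval_mul_comp (fun t => g.eval t) i l,
        integral_eval_mul_eq_integral_marginalPoly_mul hmom l p (h := fun t => g.eval t)
          (hint l)]
      simp_rw [sq]
      rfl
  simp_rw [Finset.mul_sum]
  rw [integral_finsetSum _ fun i _ => hint i]
  simp [hterm]

theorem IsSymmetric.integral_sum_marginalPoly_sq_le
    (hmom : ∀ k : ℕ, Integrable (fun t => t ^ k) μ) {p : MvPolynomial ι ℝ}
    (hp : p.IsSymmetric) (l : ι) (hmean : ∫ x, eval x p ∂(Measure.pi fun _ => μ) = 0) :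
    ∫ x : ι → ℝ, (∑ i, (marginalPoly μ l p).eval (x i)) ^ 2 ∂(Measure.pi fun _ => μ)
      ≤ ∫ x, eval x p ^ 2 ∂(Measure.pi fun _ => μ) := by
  set g := marginalPoly μ l p
  refine integral_sq_le_of_integral_mul_eq ?_ ?_ ?_ ?_
  · exact (integrable_eval hmom (p ^ 2)).congr (ae_of_all _ fun x => by simp only [eval_pow])
  · exact (integrable_eval hmom (p * ∑ i, Polynomial.aeval (X i) g)).congr
      (ae_of_all _ fun x => by simp only [eval_mul, map_sum, eval_aeval_X])
  · exact (integrable_eval hmom ((∑ i, Polynomial.aeval (X i) g) ^ 2)).congr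
      (ae_of_all _ fun x => by simp only [eval_pow, map_sum, eval_aeval_X])
  · rw [hp.integral_eval_mul_sum_marginalPoly hmom,
      integral_sum_eval_sq hmom g ((integral_marginalPoly hmom l p).trans hmean)]

theorem integral_sum_eval_update (hmom : ∀ k : ℕ, Integrable (fun t => t ^ k) μ)
    (g : Polynomial ℝ) (hg : ∫ t, g.eval t ∂μ = 0) (l : ι) (t : ℝ) :
    ∫ x : ι → ℝ, ∑ i, g.eval (update x l t i) ∂(Measure.pi fun _ => μ) = g.eval t := by
  have hsplit : ∀ x : ι → ℝ,
      ∑ i, g.eval (update x l t i) = g.eval t + ∑ i ∈ univ.erase l, g.eval (x i) := by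
    intro x
    rw [← add_sum_erase univ _ (mem_univ l), update_self]
    exact congrArg _ (sum_congr rfl fun i hi => by rw [update_of_ne (ne_of_mem_erase hi)])
  have hint : ∀ i : ι, Integrable (fun x => g.eval (x i)) (Measure.pi fun _ => μ) := fun i =>
    (integrable_eval hmom (Polynomial.aeval (X i) g)).congr
      (ae_of_all _ fun x => by simp only [eval_aeval_X])
  simp_rw [hsplit]
  rw [integral_add (integrable_const _) (integrable_finsetSum _ fun i _ => hint i),
    integral_finsetSum _ fun i _ => hint i]
  simp [integral_comp_eval (μ := fun _ => μ) g.continuous.aestronglyMeasurable, hg]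

end MvPolynomial

open MvPolynomial in
/-- Reduction to sums of a univariate polynomial: for any symmetric degree-d polynomial f
with E_{μ^m}[f] = 0 there is a univariate g of degree ≤ d with E_μ[g]=0, no larger second
moment under μ^m, and the same mean under ν_P = μ^{m-1} × δ_{λ*} (realized by fixing the
last coordinate to λ*). -/
theorem stmt10 (m d : ℕ) (hm : 1 ≤ m) (μ : MeasureTheory.Measure ℝ)
    [MeasureTheory.IsProbabilityMeasure μ]
    (hmom : ∀ k : ℕ, MeasureTheory.Integrable (fun x => x ^ k) μ)
    (lamstar : ℝ)
    (f : MvPolynomial (Fin m) ℝ) (hdeg : f.totalDegree ≤ d)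
    (hsym : ∀ π : Equiv.Perm (Fin m), MvPolynomial.rename π f = f)
    (hmean : ∫ lam : Fin m → ℝ, MvPolynomial.eval lam f
        ∂(MeasureTheory.Measure.pi fun _ => μ) = 0) :
    ∃ g : Polynomial ℝ, g.natDegree ≤ d ∧ (∫ x, g.eval x ∂μ = 0) ∧
      (∫ lam : Fin m → ℝ, (∑ i, g.eval (lam i)) ^ 2 ∂(MeasureTheory.Measure.pi fun _ => μ))
        ≤ (∫ lam : Fin m → ℝ, (MvPolynomial.eval lam f) ^ 2
            ∂(MeasureTheory.Measure.pi fun _ => μ)) ∧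
      (∫ lam : Fin m → ℝ,
          (∑ i, g.eval ((Function.update lam ⟨m - 1, Nat.sub_lt hm Nat.one_pos⟩ lamstar) i))
          ∂(MeasureTheory.Measure.pi fun _ => μ))
        = ∫ lam : Fin m → ℝ,
            MvPolynomial.eval (Function.update lam ⟨m - 1, Nat.sub_lt hm Nat.one_pos⟩ lamstar) f
            ∂(MeasureTheory.Measure.pi fun _ => μ) := by
  set l : Fin m := ⟨m - 1, Nat.sub_lt hm Nat.one_pos⟩
  have hg : ∫ t, (marginalPoly μ l f).eval t ∂μ = 0 :=
    (integral_marginalPoly hmom l f).trans hmean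
  refine ⟨marginalPoly μ l f, (natDegree_marginalPoly_le l f).trans hdeg, hg,
    IsSymmetric.integral_sum_marginalPoly_sq_le hmom hsym l hmean, ?_⟩
  rw [integral_sum_eval_update hmom _ hg, eval_marginalPoly hmom]
end
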